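/- arXiv:1510.05844 — 3 statements merged into one kernel-verified Lean document; each statement's English description precedes it below -/
import Mathlib

section
/- Let M = (M_p)_{p∈ℕ₀} be a logarithmically convex sequence of positive reals with M_0 = 1 and quotient sequence m_p = M_{p+1}/M_p. The following statements are equivalent: (a) M is of moderate growth; (b) sup_{p≥1} m_p / M_p^{1/p} < ∞; (c) sup_{p≥0} m_{2p}/m_p < ∞; (d) sup_{p≥1} (M_{2p}/M_p²)^{1/p} < ∞. -/
/-!
Log-convexity makes the quotients `m p = M (p + 1) / M p` increasing, hence
`M a * m a ^ k ≤ M (a + k) ≤ M a * m (a + k) ^ k` and `M (p + q) ^ 2 ≤ M (2 p) * M (2 q)`.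
Conditions (b) and (d) are used in the root-free form `x ≤ C ^ p`.
* (a) ⇒ (b): `m p ^ p * M p ≤ M (2 p) ≤ A ^ (2 p) * M p ^ 2`.
* (b) ⇒ (c): apply (b) at `2 p` and use `M (2 p) ≤ m p ^ p * m (2 p) ^ p`.
* (c) ⇒ (d): `M (2 p) / M p ^ 2 = ∏_{i < p} m (2 i) * m (2 i + 1) / m i ^ 2` telescopes to at most
  `C ^ (2 p) * m p / m 0`, and `m (n + 1) ≤ C ^ n * m 1`.
* (d) ⇒ (a): `M (p + q) ^ 2 ≤ M (2 p) * M (2 q) ≤ C ^ (p + q) * (M p * M q) ^ 2`.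
-/

open Finset

lemma exists_rpow_one_div_le_iff {f : ℕ → ℝ} (hf : ∀ p, 0 ≤ f p) :
    (∃ C : ℝ, ∀ p : ℕ, 1 ≤ p → f p ^ ((1 : ℝ) / p) ≤ C) ↔
      ∃ C : ℝ, 0 ≤ C ∧ ∀ p : ℕ, 1 ≤ p → f p ≤ C ^ p := by
  have key : ∀ {C : ℝ}, 0 ≤ C → ∀ p : ℕ, 1 ≤ p → (f p ^ ((1 : ℝ) / p) ≤ C ↔ f p ≤ C ^ p) := by
    intro C hC p hp
    rw [one_div, Real.rpow_inv_le_iff_of_pos (hf p) hC (by positivity), Real.rpow_natCast]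
  constructor
  · rintro ⟨C, hC⟩
    have hC0 : 0 ≤ C := (Real.rpow_nonneg (hf 1) _).trans (hC 1 le_rfl)
    exact ⟨C, hC0, fun p hp => (key hC0 p hp).1 (hC p hp)⟩
  · rintro ⟨C, hC0, hC⟩
    exact ⟨C, fun p hp => (key hC0 p hp).2 (hC p hp)⟩

lemma div_rpow_one_div {x y : ℝ} (hx : 0 ≤ x) (hy : 0 ≤ y) {p : ℕ} (hp : p ≠ 0) :
    x / y ^ ((1 : ℝ) / p) = (x ^ p / y) ^ ((1 : ℝ) / p) := by
  rw [Real.div_rpow (pow_nonneg hx p) hy, one_div, Real.pow_rpow_inv_natCast hx hp]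

noncomputable def quotSeq (M : ℕ → ℝ) (p : ℕ) : ℝ := M (p + 1) / M p

section LogConvexSequence

variable {M : ℕ → ℝ}

lemma quotSeq_pos (hpos : ∀ p, 0 < M p) (p : ℕ) : 0 < quotSeq M p :=
  div_pos (hpos _) (hpos _)

lemma mul_quotSeq (hpos : ∀ p, 0 < M p) (p : ℕ) : M p * quotSeq M p = M (p + 1) :=
  mul_div_cancel₀ _ (hpos p).ne'

lemma monotone_quotSeq (hpos : ∀ p, 0 < M p) (hlc : ∀ p, M (p + 1) ^ 2 ≤ M p * M (p + 2)) :
    Monotone (quotSeq M) := by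
  refine monotone_nat_of_le_succ fun p => ?_
  rw [quotSeq, quotSeq, div_le_div_iff₀ (hpos p) (hpos (p + 1))]
  nlinarith [hlc p]

lemma mul_prod_quotSeq (hpos : ∀ p, 0 < M p) (a k : ℕ) :
    M a * ∏ i ∈ range k, quotSeq M (a + i) = M (a + k) := by
  induction k with
  | zero => simp
  | succ k ih => rw [prod_range_succ, ← mul_assoc, ih, mul_quotSeq hpos]; rfl

lemma mul_quotSeq_pow_le (hpos : ∀ p, 0 < M p) (hlc : ∀ p, M (p + 1) ^ 2 ≤ M p * M (p + 2))
    (a k : ℕ) : M a * quotSeq M a ^ k ≤ M (a + k) := by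
  rw [← mul_prod_quotSeq hpos]
  gcongr ?_ * ?_
  · exact (hpos a).le
  calc quotSeq M a ^ k = ∏ _i ∈ range k, quotSeq M a := by simp
    _ ≤ ∏ i ∈ range k, quotSeq M (a + i) :=
      prod_le_prod (fun _ _ => (quotSeq_pos hpos a).le)
        fun i _ => monotone_quotSeq hpos hlc (Nat.le_add_right a i)

lemma le_mul_quotSeq_pow (hpos : ∀ p, 0 < M p) (hlc : ∀ p, M (p + 1) ^ 2 ≤ M p * M (p + 2))
    (a k : ℕ) : M (a + k) ≤ M a * quotSeq M (a + k) ^ k := by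
  rw [← mul_prod_quotSeq hpos]
  gcongr ?_ * ?_
  · exact (hpos a).le
  calc ∏ i ∈ range k, quotSeq M (a + i) ≤ ∏ _i ∈ range k, quotSeq M (a + k) :=
      prod_le_prod (fun i _ => (quotSeq_pos hpos _).le)
        fun i hi => monotone_quotSeq hpos hlc (by simp at hi; omega)
    _ = quotSeq M (a + k) ^ k := by simp

lemma sq_le_mul_add_add (hpos : ∀ p, 0 < M p) (hlc : ∀ p, M (p + 1) ^ 2 ≤ M p * M (p + 2))
    (a d : ℕ) : M (a + d) ^ 2 ≤ M a * M (a + d + d) := by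
  have hle : ∏ i ∈ range d, quotSeq M (a + i) ≤ ∏ i ∈ range d, quotSeq M (a + d + i) :=
    prod_le_prod (fun _ _ => (quotSeq_pos hpos _).le)
      fun i _ => monotone_quotSeq hpos hlc (by omega)
  have := (hpos a).le
  have := (hpos (a + d)).le
  calc M (a + d) ^ 2 = M a * (∏ i ∈ range d, quotSeq M (a + i)) * M (a + d) := by
        rw [mul_prod_quotSeq hpos]; ring
    _ ≤ M a * (∏ i ∈ range d, quotSeq M (a + d + i)) * M (a + d) := by gcongr
    _ = M a * M (a + d + d) := by rw [← mul_prod_quotSeq hpos (a + d) d]; ring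

lemma sq_add_le_mul_two_mul (hpos : ∀ p, 0 < M p)
    (hlc : ∀ p, M (p + 1) ^ 2 ≤ M p * M (p + 2)) (p q : ℕ) :
    M (p + q) ^ 2 ≤ M (2 * p) * M (2 * q) := by
  wlog hpq : p ≤ q generalizing p q
  · rw [add_comm, mul_comm]
    exact this q p (by omega)
  obtain ⟨d, rfl⟩ := Nat.exists_eq_add_of_le hpq
  rw [show p + (p + d) = 2 * p + d by ring, show 2 * (p + d) = 2 * p + d + d by ring]
  exact sq_le_mul_add_add hpos hlc (2 * p) d

lemma quotSeq_pow_div_le_of_moderateGrowth (hpos : ∀ p, 0 < M p)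
    (hlc : ∀ p, M (p + 1) ^ 2 ≤ M p * M (p + 2)) {A : ℝ}
    (hA : ∀ p q : ℕ, M (p + q) ≤ A ^ (p + q) * M p * M q) (p : ℕ) :
    quotSeq M p ^ p / M p ≤ (A ^ 2) ^ p := by
  rw [div_le_iff₀ (hpos p)]
  refine le_of_mul_le_mul_left ?_ (hpos p)
  calc M p * quotSeq M p ^ p ≤ M (p + p) := mul_quotSeq_pow_le hpos hlc p p
    _ ≤ A ^ (p + p) * M p * M p := hA p p
    _ = M p * ((A ^ 2) ^ p * M p) := by ring

lemma quotSeq_two_mul_le_of_pow_div_le (hpos : ∀ p, 0 < M p) (hM0 : M 0 = 1)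
    (hlc : ∀ p, M (p + 1) ^ 2 ≤ M p * M (p + 2)) {C : ℝ} (hC0 : 0 ≤ C)
    (hC : ∀ p : ℕ, 1 ≤ p → quotSeq M p ^ p / M p ≤ C ^ p) (p : ℕ) :
    quotSeq M (2 * p) ≤ max 1 (C ^ 2) * quotSeq M p := by
  have hm := quotSeq_pos hpos
  rcases Nat.eq_zero_or_pos p with rfl | hp
  · exact le_mul_of_one_le_left (hm 0).le (le_max_left _ _)
  refine le_trans ?_ (mul_le_mul_of_nonneg_right (le_max_right _ _) (hm p).le)
  have h2p : quotSeq M (2 * p) ^ (2 * p) ≤ C ^ (2 * p) * M (2 * p) :=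
    (div_le_iff₀ (hpos _)).1 (hC (2 * p) (by omega))
  have hMp : M p ≤ quotSeq M p ^ p := by
    simpa [hM0] using le_mul_quotSeq_pow hpos hlc 0 p
  have hM2p : M (2 * p) ≤ M p * quotSeq M (2 * p) ^ p := by
    simpa [two_mul] using le_mul_quotSeq_pow hpos hlc p p
  have key : quotSeq M (2 * p) ^ p * quotSeq M (2 * p) ^ p ≤
      (C ^ 2 * quotSeq M p) ^ p * quotSeq M (2 * p) ^ p := by
    calc quotSeq M (2 * p) ^ p * quotSeq M (2 * p) ^ p = quotSeq M (2 * p) ^ (2 * p) := by ring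
      _ ≤ C ^ (2 * p) * M (2 * p) := h2p
      _ ≤ C ^ (2 * p) * (quotSeq M p ^ p * quotSeq M (2 * p) ^ p) := by
        gcongr
        exact hM2p.trans (mul_le_mul_of_nonneg_right hMp (pow_nonneg (hm _).le p))
      _ = (C ^ 2 * quotSeq M p) ^ p * quotSeq M (2 * p) ^ p := by ring
  exact (pow_le_pow_iff_left₀ (hm _).le (by have := hm p; positivity) hp.ne').1
    (le_of_mul_le_mul_right key (pow_pos (hm _) p))

lemma one_le_of_quotSeq_two_mul_le (hpos : ∀ p, 0 < M p) {C : ℝ}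
    (hC : ∀ p, quotSeq M (2 * p) ≤ C * quotSeq M p) : 1 ≤ C :=
  (le_mul_iff_one_le_left (quotSeq_pos hpos 0)).1 (hC 0)

lemma quotSeq_succ_le_of_quotSeq_two_mul_le (hpos : ∀ p, 0 < M p)
    (hlc : ∀ p, M (p + 1) ^ 2 ≤ M p * M (p + 2)) {C : ℝ}
    (hC : ∀ p, quotSeq M (2 * p) ≤ C * quotSeq M p) (n : ℕ) :
    quotSeq M (n + 1) ≤ C ^ n * quotSeq M 1 := by
  have hC0 : 0 ≤ C := zero_le_one.trans (one_le_of_quotSeq_two_mul_le hpos hC)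
  induction n with
  | zero => simp
  | succ n ih =>
    calc quotSeq M (n + 1 + 1) ≤ quotSeq M (2 * (n + 1)) := monotone_quotSeq hpos hlc (by omega)
      _ ≤ C * quotSeq M (n + 1) := hC _
      _ ≤ C * (C ^ n * quotSeq M 1) := by gcongr
      _ = C ^ (n + 1) * quotSeq M 1 := by ring

lemma mul_quotSeq_zero_le_of_quotSeq_two_mul_le (hpos : ∀ p, 0 < M p) (hM0 : M 0 = 1)
    (hlc : ∀ p, M (p + 1) ^ 2 ≤ M p * M (p + 2)) {C : ℝ}
    (hC : ∀ p, quotSeq M (2 * p) ≤ C * quotSeq M p) (p : ℕ) :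
    M (2 * p) * quotSeq M 0 ≤ C ^ (2 * p) * quotSeq M p * M p ^ 2 := by
  have hm := quotSeq_pos hpos
  have hC0 : 0 ≤ C := zero_le_one.trans (one_le_of_quotSeq_two_mul_le hpos hC)
  induction p with
  | zero => simp [hM0]
  | succ p ih =>
    have hodd : quotSeq M (2 * p + 1) ≤ C * quotSeq M (p + 1) :=
      (monotone_quotSeq hpos hlc (by omega)).trans (hC (p + 1))
    have := hm p
    have := hm (2 * p)
    have := hpos (2 * p)
    rw [show 2 * (p + 1) = 2 * p + 1 + 1 by ring, ← mul_quotSeq hpos, ← mul_quotSeq hpos,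
      ← mul_quotSeq hpos]
    calc M (2 * p) * quotSeq M (2 * p) * quotSeq M (2 * p + 1) * quotSeq M 0
        = M (2 * p) * quotSeq M 0 * quotSeq M (2 * p) * quotSeq M (2 * p + 1) := by ring
      _ ≤ C ^ (2 * p) * quotSeq M p * M p ^ 2 * (C * quotSeq M p) * (C * quotSeq M (p + 1)) := by
        gcongr
        exacts [(hm _).le, hC p]
      _ = C ^ (2 * p + 1 + 1) * quotSeq M (p + 1) * (M p * quotSeq M p) ^ 2 := by ring

lemma div_sq_le_pow_of_quotSeq_two_mul_le (hpos : ∀ p, 0 < M p) (hM0 : M 0 = 1)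
    (hlc : ∀ p, M (p + 1) ^ 2 ≤ M p * M (p + 2)) {C : ℝ}
    (hC : ∀ p, quotSeq M (2 * p) ≤ C * quotSeq M p) :
    ∃ D : ℝ, 0 ≤ D ∧ ∀ p : ℕ, 1 ≤ p → M (2 * p) / M p ^ 2 ≤ D ^ p := by
  have hm := quotSeq_pos hpos
  have hC1 := one_le_of_quotSeq_two_mul_le hpos hC
  set D := quotSeq M 1 / quotSeq M 0 with hD
  have hD1 : 1 ≤ D := (one_le_div (hm 0)).2 (monotone_quotSeq hpos hlc zero_le_one)
  refine ⟨C ^ 3 * D, by positivity, fun p hp => ?_⟩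
  obtain ⟨n, rfl⟩ : ∃ n, p = n + 1 := ⟨p - 1, by omega⟩
  have := hpos (n + 1)
  rw [div_le_iff₀ (by positivity), ← mul_le_mul_iff_of_pos_right (hm 0)]
  calc M (2 * (n + 1)) * quotSeq M 0
      ≤ C ^ (2 * (n + 1)) * quotSeq M (n + 1) * M (n + 1) ^ 2 :=
        mul_quotSeq_zero_le_of_quotSeq_two_mul_le hpos hM0 hlc hC (n + 1)
    _ ≤ C ^ (2 * (n + 1)) * (C ^ n * (D * quotSeq M 0)) * M (n + 1) ^ 2 := by
        rw [hD, div_mul_cancel₀ _ (hm 0).ne']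
        gcongr
        exact quotSeq_succ_le_of_quotSeq_two_mul_le hpos hlc hC n
    _ ≤ C ^ (2 * (n + 1)) * (C ^ (n + 1) * (D ^ (n + 1) * quotSeq M 0)) * M (n + 1) ^ 2 := by
        have := hm 0
        have hCn : C ^ n ≤ C ^ (n + 1) := pow_le_pow_right₀ hC1 n.le_succ
        have hDn : D ≤ D ^ (n + 1) := le_self_pow₀ hD1 n.succ_ne_zero
        gcongr
    _ = (C ^ 3 * D) ^ (n + 1) * M (n + 1) ^ 2 * quotSeq M 0 := by ring

lemma moderateGrowth_of_div_sq_le_pow (hpos : ∀ p, 0 < M p) (hM0 : M 0 = 1)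
    (hlc : ∀ p, M (p + 1) ^ 2 ≤ M p * M (p + 2)) {C : ℝ} (hC0 : 0 ≤ C)
    (hC : ∀ p : ℕ, 1 ≤ p → M (2 * p) / M p ^ 2 ≤ C ^ p) :
    ∃ A : ℝ, 0 < A ∧ ∀ p q : ℕ, M (p + q) ≤ A ^ (p + q) * M p * M q := by
  set A := max C 1
  have hA1 : 1 ≤ A := le_max_right _ _
  have hA : ∀ p, M (2 * p) ≤ A ^ p * M p ^ 2 := by
    intro p
    rcases Nat.eq_zero_or_pos p with rfl | hp
    · simp [hM0]
    rw [← div_le_iff₀ (by have := hpos p; positivity)]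
    exact (hC p hp).trans (pow_le_pow_left₀ hC0 (le_max_left _ _) p)
  refine ⟨A, by positivity, fun p q => ?_⟩
  have := hpos p
  have := hpos q
  refine (pow_le_pow_iff_left₀ (hpos _).le (by positivity) two_ne_zero).1 ?_
  calc M (p + q) ^ 2 ≤ M (2 * p) * M (2 * q) := sq_add_le_mul_two_mul hpos hlc p q
    _ ≤ A ^ p * M p ^ 2 * (A ^ q * M q ^ 2) :=
        mul_le_mul (hA p) (hA q) (hpos _).le (by positivity)
    _ = A ^ (p + q) * (M p * M q) ^ 2 := by ring
    _ ≤ (A ^ (p + q)) ^ 2 * (M p * M q) ^ 2 := by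
        gcongr
        exact le_self_pow₀ (one_le_pow₀ hA1) two_ne_zero
    _ = (A ^ (p + q) * M p * M q) ^ 2 := by ring

end LogConvexSequence

/-- For a logarithmically convex sequence `M` of positive reals with `M 0 = 1`
and quotients `m p = M (p+1) / M p`, the following are equivalent:
(a) `M` is of moderate growth;
(b) `sup_{p ≥ 1} m p / M p ^ (1/p) < ∞`;
(c) `sup_{p ≥ 0} m (2p) / m p < ∞`;
(d) `sup_{p ≥ 1} (M (2p) / (M p)^2) ^ (1/p) < ∞`. -/
theorem stmt_1 (M : ℕ → ℝ) (hpos : ∀ p, 0 < M p) (hM0 : M 0 = 1)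
    (hlc : ∀ p : ℕ, (M (p + 1)) ^ 2 ≤ M p * M (p + 2)) :
    List.TFAE [
      (∃ A : ℝ, 0 < A ∧ ∀ p q : ℕ, M (p + q) ≤ A ^ (p + q) * M p * M q),
      (∃ C : ℝ, ∀ p : ℕ, 1 ≤ p →
        (M (p + 1) / M p) / (M p) ^ ((1 : ℝ) / (p : ℝ)) ≤ C),
      (∃ C : ℝ, ∀ p : ℕ,
        (M (2 * p + 1) / M (2 * p)) / (M (p + 1) / M p) ≤ C),
      (∃ C : ℝ, ∀ p : ℕ, 1 ≤ p →
        (M (2 * p) / (M p) ^ 2) ^ ((1 : ℝ) / (p : ℝ)) ≤ C)] := by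
  have hm := quotSeq_pos hpos
  have hb : (∃ C : ℝ, ∀ p : ℕ, 1 ≤ p → (M (p + 1) / M p) / (M p) ^ ((1 : ℝ) / (p : ℝ)) ≤ C) ↔
      ∃ C : ℝ, 0 ≤ C ∧ ∀ p : ℕ, 1 ≤ p → quotSeq M p ^ p / M p ≤ C ^ p := by
    rw [← exists_rpow_one_div_le_iff fun p => div_nonneg (pow_nonneg (hm p).le p) (hpos p).le]
    refine exists_congr fun C => forall₂_congr fun p hp => ?_
    rw [← div_rpow_one_div (hm p).le (hpos p).le (by omega)]
    rfl
  rw [hb, exists_rpow_one_div_le_iff fun p => div_nonneg (hpos _).le (sq_nonneg _)]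
  tfae_have 1 → 2 := fun ⟨A, _, hA⟩ =>
    ⟨A ^ 2, sq_nonneg A, fun p _ => quotSeq_pow_div_le_of_moderateGrowth hpos hlc hA p⟩
  tfae_have 2 → 3 := fun ⟨C, hC0, hC⟩ => ⟨max 1 (C ^ 2), fun p =>
    (div_le_iff₀ (hm p)).2 (quotSeq_two_mul_le_of_pow_div_le hpos hM0 hlc hC0 hC p)⟩
  tfae_have 3 → 4 := fun ⟨C, hC⟩ =>
    div_sq_le_pow_of_quotSeq_two_mul_le hpos hM0 hlc fun p => (div_le_iff₀ (hm p)).1 (hC p)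
  tfae_have 4 → 1 := fun ⟨C, hC0, hC⟩ => moderateGrowth_of_div_sq_le_pow hpos hM0 hlc hC0 hC
  tfae_finish
end

section
/- Let M = (M_p)_{p∈ℕ₀} and L = (L_p)_{p∈ℕ₀} be sequences of positive reals with M_0 = L_0 = 1, with quotient sequences m and ℓ. Then: (1) if m ≃ ℓ then M ≈ L; (2) if M and L are both logarithmically convex and at least one of them is of moderate growth, then M ≈ L if, and only if, m ≃ ℓ. -/
/-!
Since `M_p = m_0 ⋯ m_{p-1}`, two-sided bounds on the quotients multiply out to `M ≈ L`.
Conversely, for log-convex `M` the quotients increase, so `M_p ≤ m_p ^ p` and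
`m_p ^ p * M_p ≤ M_{2p}`; moderate growth `M_{2p} ≤ A^{2p} M_p²` then gives `m_p ^ p ≤ A^{2p} M_p`.
If also `L` is log-convex, `M_p ≤ C^p L_p ≤ C^p ℓ_p ^ p` yields `m_p ≤ A² C ℓ_p` for `p ≥ 1`.
Moderate growth is inherited along `≈`, which is symmetric, so exchanging `M` and `L` gives the
lower bound.
-/

def IsLogConvex (M : ℕ → ℝ) : Prop :=
  ∀ p : ℕ, M (p + 1) ^ 2 ≤ M p * M (p + 2)

def HasModerateGrowth (M : ℕ → ℝ) : Prop :=
  ∃ A : ℝ, 0 < A ∧ ∀ p q : ℕ, M (p + q) ≤ A ^ (p + q) * M p * M q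

def SeqEquiv (M L : ℕ → ℝ) : Prop :=
  ∃ C : ℝ, 0 < C ∧ ∃ D : ℝ, 0 < D ∧ ∀ p : ℕ, D ^ p * L p ≤ M p ∧ M p ≤ C ^ p * L p

def QuotEquiv (M L : ℕ → ℝ) : Prop :=
  ∃ c : ℝ, 0 < c ∧ ∃ d : ℝ, 0 < d ∧ ∀ p : ℕ,
    d * (L (p + 1) / L p) ≤ M (p + 1) / M p ∧ M (p + 1) / M p ≤ c * (L (p + 1) / L p)

variable {M L : ℕ → ℝ}

theorem le_pow_mul_of_quot_le (hM : ∀ p, 0 < M p) (hL : ∀ p, 0 < L p) (h0 : M 0 ≤ L 0)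
    {c : ℝ} (h : ∀ p, M (p + 1) / M p ≤ c * (L (p + 1) / L p)) : ∀ p, M p ≤ c ^ p * L p
  | 0 => by simpa using h0
  | p + 1 => calc
      M (p + 1) = M (p + 1) / M p * M p := (div_mul_cancel₀ _ (hM p).ne').symm
      _ ≤ c * (L (p + 1) / L p) * (c ^ p * L p) :=
        mul_le_mul (h p) (le_pow_mul_of_quot_le hM hL h0 h p) (hM p).le
          ((div_pos (hM _) (hM _)).le.trans (h p))
      _ = c ^ (p + 1) * L (p + 1) := by field_simp [(hL p).ne']; ring

theorem exists_forall_le_mul_of_forall_ne_zero {f g : ℕ → ℝ} (hg : ∀ p, 0 < g p) {K : ℝ}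
    (hK : 0 < K) (h : ∀ p ≠ 0, f p ≤ K * g p) : ∃ K', 0 < K' ∧ ∀ p, f p ≤ K' * g p := by
  refine ⟨max K (f 0 / g 0), lt_max_of_lt_left hK, fun p => ?_⟩
  rcases eq_or_ne p 0 with rfl | hp
  · calc f 0 = f 0 / g 0 * g 0 := (div_mul_cancel₀ _ (hg 0).ne').symm
      _ ≤ max K (f 0 / g 0) * g 0 := mul_le_mul_of_nonneg_right (le_max_right _ _) (hg 0).le
  · exact (h p hp).trans (mul_le_mul_of_nonneg_right (le_max_left _ _) (hg p).le)

namespace IsLogConvex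

theorem monotone_quot (hlc : IsLogConvex M) (hM : ∀ p, 0 < M p) :
    Monotone fun p => M (p + 1) / M p := by
  refine monotone_nat_of_le_succ fun p => ?_
  rw [div_le_div_iff₀ (hM p) (hM (p + 1))]
  nlinarith [hlc p]

theorem le_quot_pow (hlc : IsLogConvex M) (hM : ∀ p, 0 < M p) (h0 : M 0 ≤ 1) :
    ∀ p, M p ≤ (M (p + 1) / M p) ^ p
  | 0 => by simpa using h0
  | p + 1 => calc
      M (p + 1) = M (p + 1) / M p * M p := (div_mul_cancel₀ _ (hM p).ne').symm
      _ ≤ M (p + 1) / M p * (M (p + 1) / M p) ^ p :=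
        mul_le_mul_of_nonneg_left (le_quot_pow hlc hM h0 p) (div_pos (hM _) (hM _)).le
      _ = (M (p + 1) / M p) ^ (p + 1) := (pow_succ' _ _).symm
      _ ≤ (M (p + 2) / M (p + 1)) ^ (p + 1) :=
        pow_le_pow_left₀ (div_pos (hM _) (hM _)).le (hlc.monotone_quot hM p.le_succ) _

theorem quot_pow_mul_le (hlc : IsLogConvex M) (hM : ∀ p, 0 < M p) (p : ℕ) :
    ∀ q, (M (p + 1) / M p) ^ q * M p ≤ M (p + q)
  | 0 => by simp
  | q + 1 => calc
      (M (p + 1) / M p) ^ (q + 1) * M p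
          = M (p + 1) / M p * ((M (p + 1) / M p) ^ q * M p) := by ring
      _ ≤ M (p + q + 1) / M (p + q) * M (p + q) :=
        mul_le_mul (hlc.monotone_quot hM (p.le_add_right q)) (quot_pow_mul_le hlc hM p q)
          (mul_pos (pow_pos (div_pos (hM _) (hM _)) q) (hM p)).le (div_pos (hM _) (hM _)).le
      _ = M (p + (q + 1)) := div_mul_cancel₀ _ (hM _).ne'

theorem exists_quot_le_mul_quot (hMlc : IsLogConvex M) (hLlc : IsLogConvex L)
    (hM : ∀ p, 0 < M p) (hL : ∀ p, 0 < L p) (hL0 : L 0 ≤ 1) (hmg : HasModerateGrowth M)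
    {C : ℝ} (hC : 0 < C) (h : ∀ p, M p ≤ C ^ p * L p) :
    ∃ K, 0 < K ∧ ∀ p, M (p + 1) / M p ≤ K * (L (p + 1) / L p) := by
  obtain ⟨A, hA, hAmg⟩ := hmg
  refine exists_forall_le_mul_of_forall_ne_zero (fun p => div_pos (hL _) (hL _))
    (by positivity : 0 < A ^ 2 * C) fun p hp => ?_
  have hMp := hM p
  have hl := div_pos (hL (p + 1)) (hL p)
  have key : (M (p + 1) / M p) ^ p * M p ≤ (A ^ 2 * C * (L (p + 1) / L p)) ^ p * M p := calc
    (M (p + 1) / M p) ^ p * M p ≤ M (p + p) := hMlc.quot_pow_mul_le hM p p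
    _ ≤ A ^ (p + p) * M p * M p := hAmg p p
    _ ≤ A ^ (p + p) * (C ^ p * (L (p + 1) / L p) ^ p) * M p := by
      gcongr
      exact (h p).trans (by gcongr; exact hLlc.le_quot_pow hL hL0 p)
    _ = (A ^ 2 * C * (L (p + 1) / L p)) ^ p * M p := by ring
  exact le_of_pow_le_pow_left₀ hp (by positivity) (le_of_mul_le_mul_right key hMp)

end IsLogConvex

theorem SeqEquiv.symm (h : SeqEquiv M L) : SeqEquiv L M := by
  obtain ⟨C, hC, D, hD, h⟩ := h
  refine ⟨D⁻¹, inv_pos.2 hD, C⁻¹, inv_pos.2 hC, fun p => ⟨?_, ?_⟩⟩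
  · rw [inv_pow, inv_mul_le_iff₀ (pow_pos hC p)]
    exact (h p).2
  · rw [inv_pow, le_inv_mul_iff₀ (pow_pos hD p)]
    exact (h p).1

theorem HasModerateGrowth.of_seqEquiv (hmg : HasModerateGrowth L) (h : SeqEquiv M L)
    (hM : ∀ p, 0 < M p) (hL : ∀ p, 0 < L p) : HasModerateGrowth M := by
  obtain ⟨A, hA, hAmg⟩ := hmg
  obtain ⟨B, hB, _, _, hLM⟩ := h.symm
  obtain ⟨C, hC, _, _, hML⟩ := h
  refine ⟨C * A * B, by positivity, fun p q => ?_⟩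
  have := hM p
  have := hL q
  calc M (p + q) ≤ C ^ (p + q) * L (p + q) := (hML _).2
    _ ≤ C ^ (p + q) * (A ^ (p + q) * L p * L q) := by gcongr; exact hAmg p q
    _ ≤ C ^ (p + q) * (A ^ (p + q) * (B ^ p * M p) * (B ^ q * M q)) := by
      gcongr
      · exact (hLM p).2
      · exact (hLM q).2
    _ = (C * A * B) ^ (p + q) * M p * M q := by ring

theorem SeqEquiv.of_quotEquiv (hM : ∀ p, 0 < M p) (hL : ∀ p, 0 < L p) (h0 : M 0 = L 0)
    (h : QuotEquiv M L) : SeqEquiv M L := by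
  obtain ⟨c, hc, d, hd, h⟩ := h
  refine ⟨c, hc, d, hd, fun p => ⟨?_, le_pow_mul_of_quot_le hM hL h0.le (fun p => (h p).2) p⟩⟩
  have hLM := le_pow_mul_of_quot_le hL hM h0.ge (fun p => (le_inv_mul_iff₀ hd).2 (h p).1) p
  rwa [inv_pow, le_inv_mul_iff₀ (pow_pos hd p)] at hLM

theorem QuotEquiv.of_seqEquiv (hM : ∀ p, 0 < M p) (hL : ∀ p, 0 < L p) (hM0 : M 0 ≤ 1)
    (hL0 : L 0 ≤ 1) (hMlc : IsLogConvex M) (hLlc : IsLogConvex L)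
    (hmg : HasModerateGrowth M ∨ HasModerateGrowth L) (h : SeqEquiv M L) : QuotEquiv M L := by
  have hMmg : HasModerateGrowth M := hmg.elim id (·.of_seqEquiv h hM hL)
  have hLmg : HasModerateGrowth L := hmg.elim (·.of_seqEquiv h.symm hL hM) id
  obtain ⟨D, hD, _, _, hLM⟩ := h.symm
  obtain ⟨C, hC, _, _, hML⟩ := h
  obtain ⟨c, hc, hcq⟩ := hMlc.exists_quot_le_mul_quot hLlc hM hL hL0 hMmg hC (hML · |>.2)
  obtain ⟨k, hk, hkq⟩ := hLlc.exists_quot_le_mul_quot hMlc hL hM hM0 hLmg hD (hLM · |>.2)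
  exact ⟨c, hc, k⁻¹, inv_pos.2 hk, fun p => ⟨(inv_mul_le_iff₀ hk).2 (hkq p), hcq p⟩⟩

/-- For sequences `M`, `L` of positive reals with `M 0 = L 0 = 1`, with
quotient sequences `m`, `ℓ`:
(1) if `m ≃ ℓ` then `M ≈ L`;
(2) if `M` and `L` are both logarithmically convex and at least one of them is of
moderate growth, then `M ≈ L` iff `m ≃ ℓ`. -/
theorem stmt_3 (M L : ℕ → ℝ) (hMpos : ∀ p, 0 < M p) (hLpos : ∀ p, 0 < L p)
    (hM0 : M 0 = 1) (hL0 : L 0 = 1) :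
    ((∃ c : ℝ, 0 < c ∧ ∃ d : ℝ, 0 < d ∧ ∀ p : ℕ,
        d * (L (p + 1) / L p) ≤ M (p + 1) / M p ∧
        M (p + 1) / M p ≤ c * (L (p + 1) / L p)) →
      (∃ C : ℝ, 0 < C ∧ ∃ D : ℝ, 0 < D ∧ ∀ p : ℕ,
        D ^ p * L p ≤ M p ∧ M p ≤ C ^ p * L p)) ∧
    (((∀ p : ℕ, (M (p + 1)) ^ 2 ≤ M p * M (p + 2)) ∧
      (∀ p : ℕ, (L (p + 1)) ^ 2 ≤ L p * L (p + 2)) ∧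
      ((∃ A : ℝ, 0 < A ∧ ∀ p q : ℕ, M (p + q) ≤ A ^ (p + q) * M p * M q) ∨
       (∃ A : ℝ, 0 < A ∧ ∀ p q : ℕ, L (p + q) ≤ A ^ (p + q) * L p * L q))) →
      ((∃ C : ℝ, 0 < C ∧ ∃ D : ℝ, 0 < D ∧ ∀ p : ℕ,
          D ^ p * L p ≤ M p ∧ M p ≤ C ^ p * L p) ↔
        (∃ c : ℝ, 0 < c ∧ ∃ d : ℝ, 0 < d ∧ ∀ p : ℕ,
          d * (L (p + 1) / L p) ≤ M (p + 1) / M p ∧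
          M (p + 1) / M p ≤ c * (L (p + 1) / L p)))) := by
  have part1 : QuotEquiv M L → SeqEquiv M L :=
    SeqEquiv.of_quotEquiv hMpos hLpos (hM0.trans hL0.symm)
  refine ⟨part1, fun ⟨hMlc, hLlc, hmg⟩ => ⟨fun h => ?_, part1⟩⟩
  exact QuotEquiv.of_seqEquiv hMpos hLpos hM0.le hL0.le hMlc hLlc hmg h
end

section
/- Let a > 0 and let F : [a, ∞) → (0, ∞) be nondecreasing, bounded on every compact subset of [a, ∞), and regularly varying of index ρ, i.e. lim_{x→∞} F(λx)/F(x) = λ^ρ for every λ > 0. Then for every σ < ρ, the function x ↦ x^{−σ}·F(x) is almost increasing on [a, ∞), i.e. there exists a constant K ≥ 1 such that x^{−σ}·F(x) ≤ K·y^{−σ}·F(y) for all y ≥ x ≥ a. -/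
/-!
Write `g x = x ^ (-σ) * F x`. Since `F` is nondecreasing, `g x ≤ (y / x) ^ σ * g y` for `x ≤ y`,
so `g` is almost increasing on any range where `y / x` stays bounded, in particular on a compact
interval `[a, X]`. Regular variation gives `F (2x) / F x → 2 ^ ρ > 2 ^ σ`, i.e. `g x ≤ g (2x)`
for `x ≥ X`; chaining these doublings with the bounded-ratio estimate on `[x, 2x]` makes `g`
almost increasing on `[X, ∞)`, and the two ranges glue through the point `X`.
-/

open Filter Real Topology Set

def AlmostIncreasingOn (g : ℝ → ℝ) (s : Set ℝ) : Prop :=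
  ∃ K : ℝ, 1 ≤ K ∧ ∀ x ∈ s, ∀ y ∈ s, x ≤ y → g x ≤ K * g y

theorem AlmostIncreasingOn.Ici_of_Icc {g : ℝ → ℝ} {a X : ℝ}
    (hnear : AlmostIncreasingOn g (Icc a X)) (hfar : AlmostIncreasingOn g (Ici X))
    (hg : ∀ y, a ≤ y → 0 ≤ g y) : AlmostIncreasingOn g (Ici a) := by
  obtain ⟨K₁, hK₁, hnear⟩ := hnear
  obtain ⟨K₂, hK₂, hfar⟩ := hfar
  refine ⟨K₁ * K₂, one_le_mul_of_one_le_of_one_le hK₁ hK₂, fun x hx y hy hxy => ?_⟩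
  have hgy : 0 ≤ g y := hg y hy
  rw [mul_assoc]
  rcases le_total x X with hxX | hXx
  · rcases le_total y X with hyX | hXy
    · calc g x ≤ K₁ * g y := hnear x ⟨hx, hxX⟩ y ⟨hy, hyX⟩ hxy
        _ ≤ K₁ * (K₂ * g y) := by gcongr; exact le_mul_of_one_le_left hgy hK₂
    · calc g x ≤ K₁ * g X := hnear x ⟨hx, hxX⟩ X ⟨hx.trans hxX, le_rfl⟩ hxX
        _ ≤ K₁ * (K₂ * g y) := by gcongr; exact hfar X self_mem_Ici y hXy hXy
  · calc g x ≤ K₂ * g y := hfar x hXx y (hXx.trans hxy) hxy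
      _ ≤ K₁ * (K₂ * g y) :=
        le_mul_of_one_le_left (mul_nonneg (zero_le_one.trans hK₂) hgy) hK₁

theorem almostIncreasingOn_Ici_of_le_comp_mul {g : ℝ → ℝ} {X c K : ℝ} (hX : 0 < X)
    (hc : 1 < c) (hK : 1 ≤ K) (hmul : ∀ x, X ≤ x → g x ≤ g (c * x))
    (hloc : ∀ x y, X ≤ x → x ≤ y → y ≤ c * x → g x ≤ K * g y) :
    AlmostIncreasingOn g (Ici X) := by
  have hpow : ∀ n : ℕ, ∀ x y, X ≤ x → x ≤ y → y ≤ c ^ n * x → g x ≤ K * g y := by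
    intro n
    induction n with
    | zero =>
      intro x y hx hxy hy
      exact hloc x y hx hxy (by nlinarith)
    | succ n ih =>
      intro x y hx hxy hy
      rcases le_total y (c * x) with hyc | hcy
      · exact hloc x y hx hxy hyc
      · calc g x ≤ g (c * x) := hmul x hx
          _ ≤ K * g y := ih (c * x) y (by nlinarith) hcy (by rw [pow_succ] at hy; linarith)
  refine ⟨K, hK, fun x hx y _ hxy => ?_⟩
  have hx0 : 0 < x := hX.trans_le hx
  obtain ⟨n, hn⟩ := pow_unbounded_of_one_lt (y / x) hc
  exact hpow n x y hx hxy ((div_lt_iff₀ hx0).1 hn).le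

theorem rpow_neg_mul_le_max_one_rpow_mul {σ x y u v Λ : ℝ} (hx : 0 < x) (hxy : x ≤ y)
    (hyΛ : y ≤ Λ * x) (huv : u ≤ v) (hv : 0 ≤ v) :
    x ^ (-σ) * u ≤ max 1 (Λ ^ σ) * (y ^ (-σ) * v) := by
  have hy : 0 < y := hx.trans_le hxy
  have hsplit : x ^ (-σ) = (y / x) ^ σ * y ^ (-σ) := by
    rw [div_rpow hy.le hx.le, rpow_neg hx.le, rpow_neg hy.le]
    field_simp [(rpow_pos_of_pos hy σ).ne']
  have hratio : (y / x) ^ σ ≤ max 1 (Λ ^ σ) := by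
    have h1 : 1 ≤ y / x := (one_le_div hx).2 hxy
    have h2 : y / x ≤ Λ := (div_le_iff₀ hx).2 hyΛ
    rcases le_total σ 0 with hσ | hσ
    · exact (rpow_le_one_of_one_le_of_nonpos h1 hσ).trans (le_max_left _ _)
    · exact (rpow_le_rpow (by linarith) h2 hσ).trans (le_max_right _ _)
  calc x ^ (-σ) * u ≤ x ^ (-σ) * v := mul_le_mul_of_nonneg_left huv (rpow_nonneg hx.le _)
    _ = (y / x) ^ σ * (y ^ (-σ) * v) := by rw [hsplit, mul_assoc]
    _ ≤ max 1 (Λ ^ σ) * (y ^ (-σ) * v) :=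
      mul_le_mul_of_nonneg_right hratio (mul_nonneg (rpow_nonneg hy.le _) hv)

theorem almostIncreasingOn_rpow_neg_mul_Icc {F : ℝ → ℝ} {a b : ℝ} (σ : ℝ) (ha : 0 < a)
    (hF : MonotoneOn F (Ici a)) (hF0 : ∀ x, a ≤ x → 0 ≤ F x) :
    AlmostIncreasingOn (fun x => x ^ (-σ) * F x) (Icc a b) := by
  refine ⟨max 1 ((b / a) ^ σ), le_max_left _ _, fun x hx y hy hxy => ?_⟩
  have hyb : y ≤ b / a * x := by
    calc y ≤ b := hy.2
      _ = b / a * a := by field_simp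
      _ ≤ b / a * x := by
        gcongr
        · exact div_nonneg (ha.le.trans (hx.1.trans hx.2)) ha.le
        · exact hx.1
  exact rpow_neg_mul_le_max_one_rpow_mul (ha.trans_le hx.1) hxy hyb
    (hF hx.1 hy.1 hxy) (hF0 y hy.1)

theorem eventually_rpow_neg_mul_le_comp_mul {F : ℝ → ℝ} {c σ ρ : ℝ} (hc : 1 < c)
    (hσ : σ < ρ) (hF : ∀ᶠ x in atTop, 0 < F x)
    (hRV : Tendsto (fun x => F (c * x) / F x) atTop (𝓝 (c ^ ρ))) :
    ∀ᶠ x in atTop, x ^ (-σ) * F x ≤ (c * x) ^ (-σ) * F (c * x) := by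
  have hgrowth : ∀ᶠ x in atTop, c ^ σ < F (c * x) / F x :=
    hRV.eventually (eventually_gt_nhds ((rpow_lt_rpow_left_iff hc).2 hσ))
  filter_upwards [hgrowth, hF, eventually_gt_atTop 0] with x hgx hFx hx
  have hc0 : 0 < c := one_pos.trans hc
  have hFcx : c ^ σ * F x ≤ F (c * x) := ((lt_div_iff₀ hFx).1 hgx).le
  calc x ^ (-σ) * F x = c ^ (-σ) * x ^ (-σ) * (c ^ σ * F x) := by
        rw [rpow_neg hc0.le]
        field_simp [(rpow_pos_of_pos hc0 σ).ne']
    _ ≤ c ^ (-σ) * x ^ (-σ) * F (c * x) := by gcongr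
    _ = (c * x) ^ (-σ) * F (c * x) := by rw [mul_rpow hc0.le hx.le]

theorem stmt_17_general (a ρ : ℝ) (ha : 0 < a) (F : ℝ → ℝ)
    (hFpos : ∀ x : ℝ, a ≤ x → 0 < F x)
    (hFmono : ∀ x y : ℝ, a ≤ x → x ≤ y → F x ≤ F y)
    (hRV : ∀ lam : ℝ, 0 < lam →
      Filter.Tendsto (fun x : ℝ => F (lam * x) / F x) Filter.atTop
        (nhds (lam ^ ρ))) :
    ∀ σ : ℝ, σ < ρ → ∃ K : ℝ, 1 ≤ K ∧ ∀ x y : ℝ, a ≤ x → x ≤ y →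
      x ^ (-σ) * F x ≤ K * (y ^ (-σ) * F y) := by
  intro σ hσ
  have hmono : MonotoneOn F (Ici a) := fun x hx y _ hxy => hFmono x y hx hxy
  have hF0 : ∀ x, a ≤ x → 0 ≤ F x := fun x hx => (hFpos x hx).le
  obtain ⟨X₀, hdouble⟩ := eventually_atTop.1 <| eventually_rpow_neg_mul_le_comp_mul one_lt_two hσ
    (eventually_atTop.2 ⟨a, hFpos⟩) (hRV 2 two_pos)
  set X := max a X₀
  have haX : a ≤ X := le_max_left _ _
  have hfar : AlmostIncreasingOn (fun x => x ^ (-σ) * F x) (Ici X) :=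
    almostIncreasingOn_Ici_of_le_comp_mul (ha.trans_le haX) one_lt_two (le_max_left 1 (2 ^ σ))
      (fun x hx => hdouble x ((le_max_right _ _).trans hx))
      (fun x y hx hxy hy => rpow_neg_mul_le_max_one_rpow_mul (ha.trans_le (haX.trans hx)) hxy hy
        (hFmono x y (haX.trans hx) hxy) (hF0 y ((haX.trans hx).trans hxy)))
  obtain ⟨K, hK, hKg⟩ := (almostIncreasingOn_rpow_neg_mul_Icc σ ha hmono hF0).Ici_of_Icc hfar
    fun y hy => mul_nonneg (rpow_nonneg (ha.trans_le hy).le _) (hF0 y hy)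
  exact ⟨K, hK, fun x y hx hxy => hKg x hx y (hx.trans hxy) hxy⟩

/-- Let `a > 0` and `F : [a, ∞) → (0, ∞)` be nondecreasing, bounded on
compact subsets of `[a, ∞)`, and regularly varying of index `ρ`
(`lim_{x→∞} F (λ x) / F x = λ ^ ρ` for every `λ > 0`). Then for every `σ < ρ` the
function `x ↦ x ^ (-σ) * F x` is almost increasing on `[a, ∞)`. -/
theorem stmt_17 (a ρ : ℝ) (ha : 0 < a) (F : ℝ → ℝ)
    (hFpos : ∀ x : ℝ, a ≤ x → 0 < F x)
    (hFmono : ∀ x y : ℝ, a ≤ x → x ≤ y → F x ≤ F y)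
    (hFbdd : ∀ b : ℝ, a ≤ b → ∃ C : ℝ, ∀ x : ℝ, a ≤ x → x ≤ b → F x ≤ C)
    (hRV : ∀ lam : ℝ, 0 < lam →
      Filter.Tendsto (fun x : ℝ => F (lam * x) / F x) Filter.atTop
        (nhds (lam ^ ρ))) :
    ∀ σ : ℝ, σ < ρ → ∃ K : ℝ, 1 ≤ K ∧ ∀ x y : ℝ, a ≤ x → x ≤ y →
      x ^ (-σ) * F x ≤ K * (y ^ (-σ) * F y) :=
  stmt_17_general a ρ ha F hFpos hFmono hRV
end
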